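/- Let X = {(x + log(y+1), y) : x, y ∈ [0,∞)} ⊆ ℝ² and Y = X ∪ ({0} × [0,∞)) ⊆ ℝ², with the Euclidean metric. Let f : X → Y be the inclusion map and g : Y → X be given by g(x,y) = (x + log(y+1), y). Then f and g are coarse Lipschitz, g∘f ∼_∞ Id_X, f∘g ∼_∞ Id_Y, Exp_∞(g∘f) > 0 and Exp_∞(f∘g) > 0; in particular both f and g are coarse Lipschitz embeddings and X and Y are asymptotically coarse Lipschitz equivalent. -/

import Mathlib

/-- A map between (pseudo)metric spaces is coarse Lipschitz if there is `L > 0` with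
`∂(f x, f x') ≤ L · d(x, x') + L` for all `x, x'`. -/
def CoarseLipschitz {X Y : Type*} [PseudoMetricSpace X] [PseudoMetricSpace Y]
    (f : X → Y) : Prop :=
  ∃ L > (0 : ℝ), ∀ x x' : X, dist (f x) (f x') ≤ L * dist x x' + L

/-- Maps `f g : X → Y` are asymptotically close, `f ∼_∞ g`, if either `X` is bounded, or
for some basepoint `x0`: for every `ε > 0` there is `R > 0` such that
`∂(f x, g x) ≤ ε · d(x, x0)` whenever `d(x, x0) ≥ R`. -/
def AsympClose {X Y : Type*} [PseudoMetricSpace X] [PseudoMetricSpace Y]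
    (f g : X → Y) : Prop :=
  Bornology.IsBounded (Set.univ : Set X) ∨
    ∃ x0 : X, ∀ ε > (0 : ℝ), ∃ R > (0 : ℝ), ∀ x : X,
      R ≤ dist x x0 → dist (f x) (g x) ≤ ε * dist x x0

/-- `f : X → Y` is an asymptotic coarse Lipschitz equivalence with asymptotic coarse
Lipschitz inverse `g : Y → X` if `f` and `g` are coarse Lipschitz, `g ∘ f ∼_∞ Id_X` and
`f ∘ g ∼_∞ Id_Y`. -/
def AsympCLInverse {X Y : Type*} [PseudoMetricSpace X] [PseudoMetricSpace Y]
    (f : X → Y) (g : Y → X) : Prop :=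
  CoarseLipschitz f ∧ CoarseLipschitz g ∧
    AsympClose (g ∘ f) id ∧ AsympClose (f ∘ g) id

/-- `f` is an asymptotic coarse Lipschitz equivalence if it admits an asymptotic coarse
Lipschitz inverse. -/
def IsAsympCLEquiv {X Y : Type*} [PseudoMetricSpace X] [PseudoMetricSpace Y]
    (f : X → Y) : Prop :=
  ∃ g : Y → X, AsympCLInverse f g

/-- Metric spaces `X` and `Y` are asymptotically coarse Lipschitz equivalent. -/
def AsympCLEquivalent (X Y : Type*) [PseudoMetricSpace X] [PseudoMetricSpace Y] : Prop :=
  ∃ f : X → Y, IsAsympCLEquiv f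

/-- For `s > 0`, `Exp_s(f) = inf { ∂(f x, f z)/d(x,z) : d(x,z) ≥ s }`, with `inf ∅ = ∞`
(valued in `ℝ≥0∞`). -/
noncomputable def ExpAt {X Y : Type*} [PseudoMetricSpace X] [PseudoMetricSpace Y]
    (f : X → Y) (s : ℝ) : ENNReal :=
  ⨅ p : {p : X × X // s ≤ dist p.1 p.2},
    ENNReal.ofReal (dist (f p.1.1) (f p.1.2) / dist p.1.1 p.1.2)

/-- `Exp_∞(f) = sup_{s > 0} Exp_s(f)`. -/
noncomputable def ExpInfty {X Y : Type*} [PseudoMetricSpace X] [PseudoMetricSpace Y]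
    (f : X → Y) : ENNReal :=
  ⨆ s : ℝ, ⨆ _ : 0 < s, ExpAt f s

/-- The subset `X = {(x + log(y+1), y) : x, y ∈ [0,∞)}` of the Euclidean plane. -/
def LogShiftedQuadrant : Set (EuclideanSpace ℝ (Fin 2)) :=
  {p | ∃ x y : ℝ, 0 ≤ x ∧ 0 ≤ y ∧ p = ![x + Real.log (y + 1), y]}

/-- The subset `Y = X ∪ ({0} × [0,∞))` of the Euclidean plane. -/
def LogShiftedQuadrantWithAxis : Set (EuclideanSpace ℝ (Fin 2)) :=
  LogShiftedQuadrant ∪ {p | ∃ y : ℝ, 0 ≤ y ∧ p = ![(0 : ℝ), y]}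

/-! The map `g` is the shear `(x, y) ↦ (x + log (y + 1), y)`, and `y ↦ log (y + 1)` is
1-Lipschitz on `[0, ∞)`. A shear by a `K`-Lipschitz function is `(1 + K)`-Lipschitz, and so is
its inverse, the shear by the negated function; hence `g` is bi-Lipschitz, while `f` is an
isometric inclusion. This gives every Lipschitz-type assertion, including `Exp_∞ > 0`.
Both `g ∘ f` and `f ∘ g` move a point `p` by `log (p 1 + 1) ≤ log (‖p‖ + 1) = o(‖p‖)`, which
is the asymptotic closeness. -/

open Real Set Filter Asymptotics

local notation "E²" => EuclideanSpace ℝ (Fin 2)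

section CoarseMaps

variable {X Y : Type*} [PseudoMetricSpace X] [PseudoMetricSpace Y] {f g : X → Y} {K : NNReal}

theorem LipschitzWith.coarseLipschitz (hf : LipschitzWith K f) : CoarseLipschitz f := by
  refine ⟨K + 1, by positivity, fun x x' => ?_⟩
  have := hf.dist_le_mul x x'
  nlinarith [dist_nonneg (x := x) (y := x')]

theorem AntilipschitzWith.dist_le_add_one_mul (hf : AntilipschitzWith K f) (x x' : X) :
    dist x x' ≤ (K + 1) * dist (f x) (f x') := by
  have := hf.le_mul_dist x x'
  nlinarith [dist_nonneg (x := f x) (y := f x')]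

theorem AntilipschitzWith.exists_dist_ge_div_sub (hf : AntilipschitzWith K f) :
    ∃ L > (0 : ℝ), ∀ x x', dist (f x) (f x') ≥ dist x x' / L - L := by
  refine ⟨K + 1, by positivity, fun x x' => ?_⟩
  have hL : (0 : ℝ) < K + 1 := by positivity
  have : dist x x' / (K + 1) ≤ dist (f x) (f x') :=
    (div_le_iff₀ hL).2 (by linarith [hf.dist_le_add_one_mul x x'])
  linarith

theorem AntilipschitzWith.expInfty_pos (hf : AntilipschitzWith K f) : 0 < ExpInfty f := by
  have hL : (0 : ℝ) < K + 1 := by positivity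
  have hExp : ENNReal.ofReal (1 / (K + 1)) ≤ ExpAt f 1 := by
    refine le_iInf fun ⟨⟨x, x'⟩, hxx'⟩ => ENNReal.ofReal_le_ofReal ?_
    rw [div_le_div_iff₀ hL (one_pos.trans_le hxx'), one_mul]
    linarith [hf.dist_le_add_one_mul x x']
  calc 0 < ENNReal.ofReal (1 / (K + 1)) := ENNReal.ofReal_pos.2 (by positivity)
    _ ≤ ExpAt f 1 := hExp
    _ ≤ ExpInfty f := le_iSup₂ (f := fun s (_ : 0 < s) => ExpAt f s) 1 one_pos

theorem asympClose_of_dist_le_of_isLittleO {h : ℝ → ℝ} (hh : h =o[atTop] id) (x0 : X)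
    (hfg : ∀ x, dist (f x) (g x) ≤ h (dist x x0)) : AsympClose f g := by
  refine Or.inr ⟨x0, fun ε hε => ?_⟩
  obtain ⟨R, hR⟩ := eventually_atTop.1 (hh.bound hε)
  refine ⟨max R 1, by positivity, fun x hx => ?_⟩
  calc dist (f x) (g x) ≤ ‖h (dist x x0)‖ := (hfg x).trans (le_abs_self _)
    _ ≤ ε * ‖dist x x0‖ := hR _ (le_of_max_le_left hx)
    _ = ε * dist x x0 := by rw [Real.norm_of_nonneg dist_nonneg]

end CoarseMaps

theorem isLittleO_log_add_one_atTop : (fun t : ℝ => log (t + 1)) =o[atTop] id := by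
  have hshift : (fun t : ℝ => t + 1) =O[atTop] id :=
    (isBigO_refl _ _).add (isLittleO_const_id_atTop (1 : ℝ)).isBigO
  exact (isLittleO_log_id_atTop.comp_tendsto
    (tendsto_atTop_add_const_right _ 1 tendsto_id)).trans_isBigO hshift

theorem lipschitzOnWith_log_add_one : LipschitzOnWith 1 (fun t : ℝ => log (t + 1)) (Ici 0) := by
  refine (convex_Ici 0).lipschitzOnWith_of_nnnorm_hasDerivWithin_le
    (f' := fun t => 1 / (t + 1)) (fun t ht => ?_) (fun t ht => ?_) <;>
    have ht : (0 : ℝ) ≤ t := ht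
  · exact (((hasDerivAt_id' t).add_const 1).log (by linarith)).hasDerivWithinAt
  · rw [← NNReal.coe_le_coe, coe_nnnorm, Real.norm_of_nonneg (by positivity), NNReal.coe_one]
    exact (div_le_one (by linarith)).2 (by linarith)

section Shear

def shear (h : ℝ → ℝ) (p : E²) : E² := p + PiLp.single 2 0 (h (p 1))

variable {h : ℝ → ℝ} {K : NNReal} {s : Set ℝ} {A B : Set E²}

@[simp] theorem shear_apply_one (h : ℝ → ℝ) (p : E²) : shear h p 1 = p 1 := by
  simp [shear]

theorem shear_neg_shear (h : ℝ → ℝ) (p : E²) : shear (-h) (shear h p) = p := by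
  ext i; fin_cases i <;> simp [shear]

theorem eq_shear_of_ofLp_eq {p q : E²} (hpq : p.ofLp = ![q 0 + h (q 1), q 1]) :
    p = shear h q := by
  ext i; fin_cases i <;> simp [shear, hpq]

theorem dist_shear_self (h : ℝ → ℝ) (p : E²) : dist (shear h p) p = |h (p 1)| := by
  rw [dist_eq_norm, shear, add_sub_cancel_left, PiLp.norm_single, Real.norm_eq_abs]

theorem dist_shear_shear_le (hh : LipschitzOnWith K h s) {u v : E²} (hu : u 1 ∈ s)
    (hv : v 1 ∈ s) : dist (shear h u) (shear h v) ≤ (1 + K) * dist u v := by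
  have hdiff : shear h u - shear h v = (u - v) + PiLp.single 2 0 (h (u 1) - h (v 1)) := by
    ext i; fin_cases i <;> simp [shear]; ring
  have hsnd : dist (u 1) (v 1) ≤ dist u v := by
    simpa only [dist_eq_norm, PiLp.sub_apply] using PiLp.norm_apply_le (u - v) 1
  calc dist (shear h u) (shear h v)
      ≤ dist u v + dist (h (u 1)) (h (v 1)) := by
        rw [dist_eq_norm, hdiff, dist_eq_norm, dist_eq_norm]
        exact (norm_add_le _ _).trans_eq (by rw [PiLp.norm_single])
    _ ≤ dist u v + K * dist u v := by
        gcongr; exact (hh.dist_le_mul _ hu _ hv).trans (by gcongr)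
    _ = (1 + K) * dist u v := by ring

theorem dist_le_dist_shear_shear (hh : LipschitzOnWith K h s) {u v : E²} (hu : u 1 ∈ s)
    (hv : v 1 ∈ s) : dist u v ≤ (1 + K) * dist (shear h u) (shear h v) := by
  simpa only [shear_neg_shear] using
    dist_shear_shear_le hh.neg (u := shear h u) (v := shear h v) (by simpa) (by simpa)

theorem lipschitzWith_of_coe_eq_shear (hh : LipschitzOnWith K h s) (hA : ∀ p ∈ A, p 1 ∈ s)
    {g : A → B} (hg : ∀ q, (g q : E²) = shear h q) : LipschitzWith (1 + K) g :=
  .of_dist_le_mul fun q q' => by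
    simpa only [Subtype.dist_eq, hg, NNReal.coe_add, NNReal.coe_one] using
      dist_shear_shear_le hh (hA q q.2) (hA q' q'.2)

theorem antilipschitzWith_of_coe_eq_shear (hh : LipschitzOnWith K h s) (hA : ∀ p ∈ A, p 1 ∈ s)
    {g : A → B} (hg : ∀ q, (g q : E²) = shear h q) : AntilipschitzWith (1 + K) g :=
  .of_le_mul_dist fun q q' => by
    simpa only [Subtype.dist_eq, hg, NNReal.coe_add, NNReal.coe_one] using
      dist_le_dist_shear_shear hh (hA q q.2) (hA q' q'.2)

end Shear

theorem dist_shear_log_self_le {p : E²} (hp : 0 ≤ p 1) :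
    dist (shear (fun t => log (t + 1)) p) p ≤ log (dist p 0 + 1) := by
  have hsnd : p 1 ≤ dist p 0 := by
    simpa only [dist_zero_right, Real.norm_of_nonneg hp] using PiLp.norm_apply_le p 1
  rw [dist_shear_self, abs_of_nonneg (log_nonneg (by linarith))]
  exact log_le_log (by linarith) (by linarith)

theorem asympClose_id_of_coe_eq_shear_log {A : Set E²} (h0 : 0 ∈ A) (hA : ∀ p ∈ A, 0 ≤ p 1)
    {u : A → A} (hu : ∀ p, (u p : E²) = shear (fun t => log (t + 1)) p) : AsympClose u id :=
  asympClose_of_dist_le_of_isLittleO isLittleO_log_add_one_atTop ⟨0, h0⟩ fun p => by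
    simpa only [Subtype.dist_eq, hu, id] using dist_shear_log_self_le (hA p p.2)

theorem logShiftedQuadrant_snd_nonneg : ∀ p ∈ LogShiftedQuadrant, 0 ≤ p 1 := by
  rintro p ⟨x, y, -, hy, hp⟩
  simpa [hp] using hy

theorem logShiftedQuadrantWithAxis_snd_nonneg :
    ∀ p ∈ LogShiftedQuadrantWithAxis, 0 ≤ p 1 := by
  rintro p (hp | ⟨y, hy, hp⟩)
  · exact logShiftedQuadrant_snd_nonneg p hp
  · simpa [hp] using hy

theorem zero_mem_logShiftedQuadrant : (0 : E²) ∈ LogShiftedQuadrant :=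
  ⟨0, 0, le_rfl, le_rfl, by ext i; fin_cases i <;> simp⟩

/-- With `f : X → Y` the inclusion and `g : Y → X` given by
`g(x,y) = (x + log(y+1), y)`, the maps `f` and `g` are coarse Lipschitz,
`g ∘ f ∼_∞ Id_X`, `f ∘ g ∼_∞ Id_Y`, `Exp_∞(g ∘ f) > 0` and `Exp_∞(f ∘ g) > 0`; in
particular `f` and `g` are coarse Lipschitz embeddings and `X`, `Y` are asymptotically
coarse Lipschitz equivalent. -/
theorem logShiftedQuadrant_asympCLEquiv
    (f : LogShiftedQuadrant → LogShiftedQuadrantWithAxis)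
    (g : LogShiftedQuadrantWithAxis → LogShiftedQuadrant)
    (hf : ∀ p : LogShiftedQuadrant,
      (f p : EuclideanSpace ℝ (Fin 2)) = (p : EuclideanSpace ℝ (Fin 2)))
    (hg : ∀ q : LogShiftedQuadrantWithAxis,
      (g q : EuclideanSpace ℝ (Fin 2)) =
        ![(q : EuclideanSpace ℝ (Fin 2)) 0 +
            Real.log ((q : EuclideanSpace ℝ (Fin 2)) 1 + 1),
          (q : EuclideanSpace ℝ (Fin 2)) 1]) :
    CoarseLipschitz f ∧ CoarseLipschitz g ∧
      AsympClose (g ∘ f) id ∧ AsympClose (f ∘ g) id ∧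
      0 < ExpInfty (g ∘ f) ∧ 0 < ExpInfty (f ∘ g) ∧
      (∃ L > (0 : ℝ), ∀ p p' : LogShiftedQuadrant,
        dist (f p) (f p') ≥ dist p p' / L - L) ∧
      (∃ L > (0 : ℝ), ∀ q q' : LogShiftedQuadrantWithAxis,
        dist (g q) (g q') ≥ dist q q' / L - L) ∧
      AsympCLEquivalent LogShiftedQuadrant LogShiftedQuadrantWithAxis := by
  have hY := logShiftedQuadrantWithAxis_snd_nonneg
  have hg' (q : LogShiftedQuadrantWithAxis) : (g q : E²) = shear (fun t => log (t + 1)) q :=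
    eq_shear_of_ofLp_eq (hg q)
  have hfI : Isometry f := .of_dist_eq fun p p' => by simp only [Subtype.dist_eq, hf]
  have hgL := lipschitzWith_of_coe_eq_shear lipschitzOnWith_log_add_one hY hg'
  have hgA := antilipschitzWith_of_coe_eq_shear lipschitzOnWith_log_add_one hY hg'
  have hgf : AsympClose (g ∘ f) id :=
    asympClose_id_of_coe_eq_shear_log zero_mem_logShiftedQuadrant logShiftedQuadrant_snd_nonneg
      fun p => by simp only [Function.comp_apply, hg', hf]
  have hfg : AsympClose (f ∘ g) id :=
    asympClose_id_of_coe_eq_shear_log (.inl zero_mem_logShiftedQuadrant) hY fun q => by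
      simp only [Function.comp_apply, hf, hg']
  exact ⟨hfI.lipschitz.coarseLipschitz, hgL.coarseLipschitz, hgf, hfg,
    (hgA.comp hfI.antilipschitz).expInfty_pos, (hfI.antilipschitz.comp hgA).expInfty_pos,
    hfI.antilipschitz.exists_dist_ge_div_sub, hgA.exists_dist_ge_div_sub,
    f, g, hfI.lipschitz.coarseLipschitz, hgL.coarseLipschitz, hgf, hfg⟩
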